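/- Let T be a tree in which every internal (non-leaf) vertex has degree 3 and there are t ≥ 1 internal vertices; then T has t + 2 leaves. If a 5-vertex balloon is attached at each leaf, the resulting 3-regular graph G has n = 6t + 10 vertices and its largest 2-regular subgraph has exactly 5(t+2) = 5(n+2)/6 vertices. -/

import Mathlib

/-!
Counting degrees in the tree gives `t + 2` leaves, hence `t + 5 (t + 2)` vertices in `G`, and a
Hamiltonian cycle of each balloon yields a 2-regular subgraph on all `5 (t + 2)` balloon vertices.
Conversely, a 2-regular subgraph `H` has even degrees, so it cannot use the single edge leaving a
balloon. If `H` met an internal vertex, the internal vertices it meets would then form a nonempty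
set of tree vertices each with two neighbours inside the set, which is impossible in a tree. So
`H` lies inside the balloons.
-/

open SimpleGraph

/-- `H` is a 2-regular subgraph: every vertex of `H` has degree exactly 2 in `H`. -/
def IsTwoRegularSub {V : Type} (G : SimpleGraph V) (H : G.Subgraph) : Prop :=
  ∀ v ∈ H.verts, (H.neighborSet v).ncard = 2

/-- The 5-vertex balloon: `K₄` on `{0,1,2,3}` with the edge `{0,1}` subdivided by the new
vertex `4` (so `4` is the unique vertex of degree 2). -/
def balloon5 : SimpleGraph (Fin 5) :=
  SimpleGraph.fromRel (fun a b =>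
    (a = 0 ∧ b = 2) ∨ (a = 0 ∧ b = 3) ∨ (a = 1 ∧ b = 2) ∨ (a = 1 ∧ b = 3) ∨
    (a = 2 ∧ b = 3) ∨ (a = 0 ∧ b = 4) ∨ (a = 1 ∧ b = 4))

lemma Set.ncard_iUnion_of_ncard_eq {ι α : Type*} [Finite ι] [Finite α] {s : ι → Set α}
    (hs : Pairwise fun i j => Disjoint (s i) (s j)) {k : ℕ} (h : ∀ i, (s i).ncard = k) :
    (⋃ i, s i).ncard = k * Nat.card ι := by
  have := Fintype.ofFinite ι
  rw [Set.ncard_iUnion_of_finite (fun _ => Set.toFinite _) hs, finsum_eq_sum_of_fintype]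
  simp [h, mul_comm]

lemma Nat.card_eq_of_partition {ι α : Type*} [Finite ι] [Finite α] {s : ι → Set α}
    (hs : Pairwise fun i j => Disjoint (s i) (s j)) (hcover : ∀ a, ∃ i, a ∈ s i) {A : Set ι}
    {k m : ℕ} (hA : ∀ i ∈ A, (s i).ncard = k) (hAc : ∀ i ∉ A, (s i).ncard = m) :
    Nat.card α = k * A.ncard + m * Aᶜ.ncard := by
  classical
  have := Fintype.ofFinite ι
  have hsi : ∀ i, (s i).ncard = if i ∈ A then k else m := fun i => by
    split_ifs with hi
    exacts [hA i hi, hAc i hi]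
  rw [← Set.ncard_univ, ← Set.iUnion_eq_univ_iff.2 hcover,
    Set.ncard_iUnion_of_finite (fun _ => Set.toFinite _) hs, finsum_eq_sum_of_fintype,
    Finset.sum_congr rfl fun i _ => hsi i, Finset.sum_ite, Finset.sum_const, Finset.sum_const,
    smul_eq_mul, smul_eq_mul, ← Set.ncard_coe_finset, ← Set.ncard_coe_finset]
  simp only [Finset.coe_filter, Finset.mem_univ, true_and, Set.ofPred_mem_eq]
  rw [mul_comm k, mul_comm m]
  rfl

namespace SimpleGraph

variable {V : Type*} {G : SimpleGraph V}

lemma ncard_neighborSet_eq_degree [Fintype V] (G : SimpleGraph V) [DecidableRel G.Adj] (v : V) :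
    (G.neighborSet v).ncard = G.degree v := by
  rw [← Nat.card_coe_set_eq, Nat.card_eq_fintype_card, card_neighborSet_eq_degree]

lemma IsTree.ncard_leaves_eq [Fintype V] {T : SimpleGraph V} (hT : T.IsTree)
    (hdeg : ∀ v, (T.neighborSet v).ncard = 1 ∨ (T.neighborSet v).ncard = 3) :
    {v | (T.neighborSet v).ncard = 1}.ncard = {v | (T.neighborSet v).ncard = 3}.ncard + 2 := by
  classical
  simp only [ncard_neighborSet_eq_degree] at hdeg ⊢
  simp only [Set.ncard_eq_toFinset_card', Set.toFinset_ofPred, Finset.card_filter]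
  have hcard : ∑ v, ((if T.degree v = 1 then 1 else 0) + (if T.degree v = 3 then 1 else 0)) =
      ∑ _v : V, 1 :=
    Finset.sum_congr rfl fun v _ => by rcases hdeg v with h | h <;> simp [h]
  have hsum : ∑ v, ((if T.degree v = 1 then 1 else 0) + 3 * (if T.degree v = 3 then 1 else 0)) =
      ∑ v, T.degree v :=
    Finset.sum_congr rfl fun v _ => by rcases hdeg v with h | h <;> simp [h]
  rw [Finset.sum_add_distrib, Finset.sum_const, smul_eq_mul, mul_one, Finset.card_univ] at hcard
  rw [Finset.sum_add_distrib, ← Finset.mul_sum, sum_degrees_eq_twice_card_edges] at hsum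
  have := hT.card_edgeFinset
  omega

lemma IsAcyclic.exists_neighborSet_subsingleton [Finite V] [Nonempty V] (hG : G.IsAcyclic) :
    ∃ v, (G.neighborSet v).Subsingleton := by
  obtain ⟨u, v, p, hp, hmax⟩ := Walk.exists_isPath_forall_isPath_length_le_length G
  have hsnd : ∀ w, G.Adj u w → w = p.snd := fun w hadj => by
    by_contra hne
    have hw : w ∉ p.support := fun hs => hne (hG.eq_snd_of_adj_start hp hadj hs)
    simpa using hmax _ _ _ (hp.cons hw (h := hadj.symm))
  exact ⟨u, fun a ha b hb => (hsnd a ha).trans (hsnd b hb).symm⟩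

lemma IsAcyclic.eq_empty_of_forall_exists_two_adj [Finite V] (hG : G.IsAcyclic) {s : Set V}
    (hs : ∀ v ∈ s, ∃ a ∈ s, ∃ b ∈ s, a ≠ b ∧ G.Adj v a ∧ G.Adj v b) : s = ∅ := by
  by_contra hne
  have : Nonempty s := (Set.nonempty_iff_ne_empty.2 hne).to_subtype
  obtain ⟨⟨v, hv⟩, hsub⟩ := (hG.induce s).exists_neighborSet_subsingleton
  obtain ⟨a, ha, b, hb, hab, hva, hvb⟩ := hs v hv
  exact hab (congrArg Subtype.val (hsub (x := ⟨a, ha⟩) hva (y := ⟨b, hb⟩) hvb))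

def HasAtMostOneEdgeOut (G : SimpleGraph V) (s : Set V) : Prop :=
  ∀ ⦃u v u' v'⦄, u ∈ s → v ∉ s → u' ∈ s → v' ∉ s → G.Adj u v → G.Adj u' v' → u = u' ∧ v = v'

namespace Subgraph

lemma even_sum_ncard_neighborSet_sdiff [Fintype V] {H : G.Subgraph}
    (hH : ∀ v, Even (H.neighborSet v).ncard) (s : Finset V) :
    Even (∑ v ∈ s, (H.neighborSet v \ s).ncard) := by
  classical
  set K := (H.induce s).spanningCoe
  have hK : ∀ v, (K.neighborSet v).ncard =
      if v ∈ s then (H.neighborSet v ∩ s).ncard else 0 := fun v => by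
    split_ifs with hv
    · congr 1; ext w; simp [K, hv, and_comm]
    · convert Set.ncard_empty V; ext w; simp [K, hv]
  have hK_sum : ∑ v, (K.neighborSet v).ncard = ∑ v ∈ s, (H.neighborSet v ∩ s).ncard := by
    simp only [hK, Finset.sum_ite_mem, Finset.univ_inter]
  have hsplit : ∑ v ∈ s, (H.neighborSet v ∩ s).ncard + ∑ v ∈ s, (H.neighborSet v \ s).ncard =
      ∑ v ∈ s, (H.neighborSet v).ncard := by
    rw [← Finset.sum_add_distrib]
    exact Finset.sum_congr rfl fun v _ => Set.ncard_inter_add_ncard_sdiff_eq_ncard _ _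
  have hK_even : Even (∑ v, (K.neighborSet v).ncard) := by
    simp only [ncard_neighborSet_eq_degree, sum_degrees_eq_twice_card_edges, even_two_mul]
  rw [hK_sum] at hK_even
  have hH_even : Even (∑ v ∈ s, (H.neighborSet v).ncard) := Finset.even_sum _ fun v _ => hH v
  rw [← hsplit, Nat.even_add] at hH_even
  exact hH_even.1 hK_even

lemma not_adj_of_hasAtMostOneEdgeOut [Finite V] {H : G.Subgraph}
    (hH : ∀ v, Even (H.neighborSet v).ncard) {s : Set V} (hs : G.HasAtMostOneEdgeOut s)
    {u v : V} (hu : u ∈ s) (hv : v ∉ s) : ¬ H.Adj u v := by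
  classical
  have := Fintype.ofFinite V
  intro huv
  have hout : ∀ x ∈ s, ∀ y, y ∈ H.neighborSet x \ s.toFinset ↔ x = u ∧ y = v := by
    intro x hx y
    simp only [Set.coe_toFinset, Set.mem_sdiff, mem_neighborSet]
    refine ⟨fun ⟨hxy, hy⟩ => hs hx hy hu hv (H.adj_sub hxy) (H.adj_sub huv), ?_⟩
    rintro ⟨rfl, rfl⟩
    exact ⟨huv, hv⟩
  have hsum : ∑ x ∈ s.toFinset, (H.neighborSet x \ s.toFinset).ncard = 1 := by
    rw [Finset.sum_eq_single u]
    · rw [Set.ncard_eq_one]; exact ⟨v, Set.ext fun y => (hout u hu y).trans (by simp)⟩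
    · intro x hx hxu
      rw [Set.ncard_eq_zero]
      exact Set.eq_empty_of_forall_notMem fun y hy => hxu ((hout x (by simpa using hx) y).1 hy).1
    · simp [hu]
  have := even_sum_ncard_neighborSet_sdiff hH s.toFinset
  rw [hsum] at this
  exact Nat.not_even_one this

end Subgraph

end SimpleGraph

section TwoRegular

variable {U V : Type} {G : SimpleGraph V}

lemma SimpleGraph.Walk.IsCycle.isTwoRegularSub_toSubgraph {u : V} {p : G.Walk u u}
    (hp : p.IsCycle) : IsTwoRegularSub G p.toSubgraph :=
  fun _ hv => hp.ncard_neighborSet_toSubgraph_eq_two (p.mem_verts_toSubgraph.1 hv)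

lemma SimpleGraph.IsHamiltonian.exists_isTwoRegularSub_verts_eq_range [Fintype U] [DecidableEq U]
    [Nontrivial U] {F : SimpleGraph U} (hF : F.IsHamiltonian) (f : F ↪g G) :
    ∃ H : G.Subgraph, IsTwoRegularSub G H ∧ H.verts = Set.range f := by
  obtain ⟨p, hp⟩ := hF.exists_isHamiltonianCycle (Classical.arbitrary U)
  refine ⟨(p.map f.toHom).toSubgraph, (hp.isCycle.map f.injective).isTwoRegularSub_toSubgraph, ?_⟩
  ext v
  simp [hp.mem_support]

lemma IsTwoRegularSub.even_ncard_neighborSet {H : G.Subgraph} (hH : IsTwoRegularSub G H)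
    (v : V) : Even (H.neighborSet v).ncard := by
  by_cases hv : v ∈ H.verts
  · rw [hH v hv]; exact even_two
  · have : H.neighborSet v = ∅ := Set.eq_empty_of_forall_notMem fun w hw => hv (H.edge_vert hw)
    simp [this]

lemma IsTwoRegularSub.iSup {ι : Type*} {H : ι → G.Subgraph} (hH : ∀ i, IsTwoRegularSub G (H i))
    (hdisj : Pairwise fun i j => Disjoint (H i).verts (H j).verts) :
    IsTwoRegularSub G (⨆ i, H i) := by
  intro v hv
  obtain ⟨i, hi⟩ := Set.mem_iUnion.1 (Subgraph.verts_iSup ▸ hv)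
  have : (⨆ i, H i).neighborSet v = (H i).neighborSet v := by
    refine (Subgraph.neighborSet_iSup H v).trans <| subset_antisymm
      (Set.iUnion_subset fun j w hw => ?_) (Set.subset_iUnion (fun j => (H j).neighborSet v) i)
    obtain rfl | hji := eq_or_ne j i
    · exact hw
    · exact absurd hi (Set.disjoint_left.1 (hdisj hji) ((H j).edge_vert hw))
  rw [this, hH i v hi]

end TwoRegular

section Balloon

variable {V : Type} {G : SimpleGraph V} {s : Set V}

instance : DecidableRel balloon5.Adj := fun a b => decidable_of_iff' _ (fromRel_adj _ a b)

lemma balloon5_isHamiltonian : balloon5.IsHamiltonian := by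
  intro _
  refine ⟨4, .cons (v := 0) (by decide) <| .cons (v := 2) (by decide) <|
    .cons (v := 3) (by decide) <| .cons (v := 1) (by decide) <| .cons (by decide) .nil, ?_⟩
  rw [Walk.isHamiltonianCycle_iff_isCycle_and_support_count_tail_eq_one]
  refine ⟨by simp [Walk.cons_isCycle_iff], fun a => ?_⟩
  fin_cases a <;> rfl

lemma ncard_eq_five_of_iso_balloon5 (e : balloon5 ≃g G.induce s) : s.ncard = 5 := by
  rw [← Nat.card_coe_set_eq, ← Nat.card_congr e.toEquiv, Nat.card_eq_fintype_card,
    Fintype.card_fin]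

lemma exists_isTwoRegularSub_verts_eq_of_iso_balloon5 (e : balloon5 ≃g G.induce s) :
    ∃ H : G.Subgraph, IsTwoRegularSub G H ∧ H.verts = s := by
  classical
  obtain ⟨H, hH, hverts⟩ := balloon5_isHamiltonian.exists_isTwoRegularSub_verts_eq_range
    (e.toEmbedding.trans (Embedding.induce s))
  refine ⟨H, hH, hverts.trans ?_⟩
  ext v
  simp

lemma hasAtMostOneEdgeOut_of_iso_balloon5 [Finite V] (e : balloon5 ≃g G.induce s)
    (h4 : (G.neighborSet (e 4)).ncard = 3)
    (hattach : ∀ u ∈ s, (∃ v, v ∉ s ∧ G.Adj u v) → u = e 4) : G.HasAtMostOneEdgeOut s := by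
  intro u v u' v' hu hv hu' hv' huv hu'v'
  obtain rfl := hattach u hu ⟨v, hv, huv⟩
  obtain rfl := hattach u' hu' ⟨v', hv', hu'v'⟩
  refine ⟨rfl, ?_⟩
  have hin : ({↑(e 0), ↑(e 1)} : Set V) ⊆ G.neighborSet (e 4) ∩ s := by
    rintro _ (rfl | rfl)
    · exact ⟨e.map_adj_iff.2 (by decide : balloon5.Adj 4 0), Subtype.coe_prop _⟩
    · exact ⟨e.map_adj_iff.2 (by decide : balloon5.Adj 4 1), Subtype.coe_prop _⟩
  have h01 : ({↑(e 0), ↑(e 1)} : Set V).ncard = 2 :=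
    Set.ncard_pair fun h => absurd (e.injective (Subtype.ext h)) (by decide : (0 : Fin 5) ≠ 1)
  have hout : (G.neighborSet (e 4) \ s).ncard ≤ 1 := by
    have := Set.ncard_inter_add_ncard_sdiff_eq_ncard (G.neighborSet (e 4)) s
    have := Set.ncard_le_ncard hin
    omega
  exact Set.ncard_le_one_iff_subsingleton.1 hout ⟨huv, hv⟩ ⟨hu'v', hv'⟩

end Balloon

lemma IsTwoRegularSub.disjoint_verts_of_isAcyclic {V W : Type} [Finite W] {G : SimpleGraph V}
    {T : SimpleGraph W} (hT : T.IsAcyclic) {P : W → Set V}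
    (hdisj : Pairwise fun w w' => Disjoint (P w) (P w')) (hcover : ∀ v : V, ∃ w : W, v ∈ P w)
    (hcross : ∀ w w' : W, w ≠ w' → ∀ u ∈ P w, ∀ v ∈ P w', G.Adj u v → T.Adj w w')
    {A : Set W} (hA : ∀ w ∈ A, (P w).Subsingleton) {H : G.Subgraph} (hH : IsTwoRegularSub G H)
    (hout : ∀ w ∉ A, ∀ u ∈ P w, ∀ v ∉ P w, ¬ H.Adj u v) {w : W} (hw : w ∈ A) :
    Disjoint (P w) H.verts := by
  set S := {w ∈ A | ∃ v ∈ P w, v ∈ H.verts}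
  suffices S = ∅ from
    Set.disjoint_left.2 fun v hv hvH => (this ▸ ⟨hw, v, hv, hvH⟩ : w ∈ (∅ : Set W))
  refine hT.eq_empty_of_forall_exists_two_adj ?_
  rintro w ⟨hwA, v, hv, hvH⟩
  have hnbr : ∀ x, H.Adj v x → ∃ wx ∈ S, x ∈ P wx ∧ T.Adj w wx := by
    intro x hvx
    obtain ⟨wx, hx⟩ := hcover x
    have hne : w ≠ wx := by
      rintro rfl
      exact (H.adj_sub hvx).ne (hA w hwA hv hx)
    have hwx : wx ∈ A := by
      by_contra hwx
      exact hout wx hwx x hx v (Set.disjoint_left.1 (hdisj hne) hv) hvx.symm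
    exact ⟨wx, ⟨hwx, x, hx, H.edge_vert hvx.symm⟩, hx, hcross w wx hne v hv x hx (H.adj_sub hvx)⟩
  obtain ⟨a, b, hab, hnbrs⟩ := Set.ncard_eq_two.1 (hH v hvH)
  obtain ⟨wa, hwa, ha, hTa⟩ := hnbr a (show a ∈ H.neighborSet v by simp [hnbrs])
  obtain ⟨wb, hwb, hb, hTb⟩ := hnbr b (show b ∈ H.neighborSet v by simp [hnbrs])
  refine ⟨wa, hwa, wb, hwb, ?_, hTa, hTb⟩
  rintro rfl
  exact hab (hA wa hwa.1 ha hb)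

theorem tree_with_balloons_general {W V : Type} [Fintype W] [Fintype V]
    (T : SimpleGraph W) (htree : T.IsTree)
    (hdeg : ∀ w : W, (T.neighborSet w).ncard = 1 ∨ (T.neighborSet w).ncard = 3)
    (t : ℕ) (ht : {w : W | (T.neighborSet w).ncard = 3}.ncard = t)
    (G : SimpleGraph V)
    (hGreg : ∀ v : V, (G.neighborSet v).ncard = 3)
    (P : W → Set V)
    (hdisj : Pairwise fun w w' => Disjoint (P w) (P w'))
    (hcover : ∀ v : V, ∃ w : W, v ∈ P w)
    (hint : ∀ w : W, (T.neighborSet w).ncard = 3 → (P w).ncard = 1)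
    (hleaf : ∀ w : W, (T.neighborSet w).ncard = 1 →
      ∃ e : balloon5 ≃g (G.induce (P w)),
        ∀ u ∈ P w, (∃ v, v ∉ P w ∧ G.Adj u v) → u = ↑(e 4))
    (hcross₁ : ∀ w w' : W, w ≠ w' → ∀ u ∈ P w, ∀ v ∈ P w', G.Adj u v → T.Adj w w') :
    {w : W | (T.neighborSet w).ncard = 1}.ncard = t + 2 ∧
    Fintype.card V = 6 * t + 10 ∧
    (∃ H : G.Subgraph, IsTwoRegularSub G H ∧ H.verts.ncard = 5 * (t + 2)) ∧
    (∀ H : G.Subgraph, IsTwoRegularSub G H → H.verts.ncard ≤ 5 * (t + 2)) := by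
  set L := {w : W | (T.neighborSet w).ncard = 1}
  have hL : L.ncard = t + 2 := ht ▸ htree.ncard_leaves_eq hdeg
  have h5 : ∀ w ∈ L, (P w).ncard = 5 :=
    fun w hw => (hleaf w hw).elim fun e _ => ncard_eq_five_of_iso_balloon5 e
  have hB : (⋃ w : L, P w).ncard = 5 * (t + 2) := by
    rw [Set.ncard_iUnion_of_ncard_eq (fun w w' h => hdisj (Subtype.coe_injective.ne h))
      (fun w => h5 w w.2), Nat.card_coe_set_eq, hL]
  refine ⟨hL, ?_, ?_, fun H hH => ?_⟩
  · have hLc : Lᶜ = {w | (T.neighborSet w).ncard = 3} := by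
      ext w
      simp only [L, Set.mem_compl_iff, Set.mem_ofPred_eq]
      have := hdeg w
      omega
    rw [← Nat.card_eq_fintype_card, Nat.card_eq_of_partition hdisj hcover h5
      (fun w hw => hint w ((hdeg w).resolve_left hw)), hL, hLc, ht]
    ring
  · choose C hC using fun w : L => (hleaf w w.2).elim fun e _ =>
      exists_isTwoRegularSub_verts_eq_of_iso_balloon5 e
    refine ⟨⨆ w, C w, IsTwoRegularSub.iSup (fun w => (hC w).1) fun w w' h => ?_, ?_⟩
    · simp only [(hC _).2]
      exact hdisj (Subtype.coe_injective.ne h)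
    · simp only [Subgraph.verts_iSup, (hC _).2, hB]
  · have hout : ∀ w ∉ {w | (T.neighborSet w).ncard = 3}, ∀ u ∈ P w, ∀ v ∉ P w, ¬ H.Adj u v := by
      intro w hw u hu v hv
      obtain ⟨e, he⟩ := hleaf w ((hdeg w).resolve_right hw)
      exact Subgraph.not_adj_of_hasAtMostOneEdgeOut hH.even_ncard_neighborSet
        (hasAtMostOneEdgeOut_of_iso_balloon5 e (hGreg _) he) hu hv
    refine hB ▸ Set.ncard_le_ncard (fun v hv => ?_)
    obtain ⟨w, hw⟩ := hcover v
    rcases hdeg w with h1 | h3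
    · exact Set.mem_iUnion.2 ⟨⟨w, h1⟩, hw⟩
    · refine absurd hv (Set.disjoint_left.1 ?_ hw)
      exact hH.disjoint_verts_of_isAcyclic htree.isAcyclic hdisj hcover hcross₁
        (fun w hw => Set.ncard_le_one_iff_subsingleton.1 (hint w hw).le) hout h3

/-- Let `T` be a tree whose vertices have degree 1 or 3, with `t ≥ 1` vertices of degree 3.
Then `T` has `t + 2` leaves.  Moreover, if `G` is the cubic graph obtained by attaching a
5-vertex balloon at each leaf of `T` (encoded by the partition `P` of `V(G)` into
singletons for internal vertices and balloons for leaves, with cross edges exactly the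
tree edges and balloons attached at their degree-2 vertex), then `G` has `6t + 10`
vertices and its largest 2-regular subgraph has exactly `5(t+2)` vertices. -/
theorem tree_with_balloons {W V : Type} [Fintype W] [Fintype V]
    (T : SimpleGraph W) (htree : T.IsTree)
    (hdeg : ∀ w : W, (T.neighborSet w).ncard = 1 ∨ (T.neighborSet w).ncard = 3)
    (t : ℕ) (ht : {w : W | (T.neighborSet w).ncard = 3}.ncard = t) (ht1 : 1 ≤ t)
    (G : SimpleGraph V)
    (hGreg : ∀ v : V, (G.neighborSet v).ncard = 3)
    (P : W → Set V)
    (hdisj : Pairwise fun w w' => Disjoint (P w) (P w'))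
    (hcover : ∀ v : V, ∃ w : W, v ∈ P w)
    (hint : ∀ w : W, (T.neighborSet w).ncard = 3 → (P w).ncard = 1)
    (hleaf : ∀ w : W, (T.neighborSet w).ncard = 1 →
      ∃ e : balloon5 ≃g (G.induce (P w)),
        ∀ u ∈ P w, (∃ v, v ∉ P w ∧ G.Adj u v) → u = ↑(e 4))
    (hcross₁ : ∀ w w' : W, w ≠ w' → ∀ u ∈ P w, ∀ v ∈ P w', G.Adj u v → T.Adj w w')
    (hcross₂ : ∀ w w' : W, T.Adj w w' → ∃ u ∈ P w, ∃ v ∈ P w', G.Adj u v) :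
    {w : W | (T.neighborSet w).ncard = 1}.ncard = t + 2 ∧
    Fintype.card V = 6 * t + 10 ∧
    (∃ H : G.Subgraph, IsTwoRegularSub G H ∧ H.verts.ncard = 5 * (t + 2)) ∧
    (∀ H : G.Subgraph, IsTwoRegularSub G H → H.verts.ncard ≤ 5 * (t + 2)) :=
  tree_with_balloons_general T htree hdeg t ht G hGreg P hdisj hcover hint hleaf hcross₁
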